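/- arXiv:2202.00140 — 3 statements merged into one kernel-verified Lean document; each statement's English description precedes it below -/
import Mathlib

section
/- Let d ≥ 2, N ≥ 2, δ > 0, and let m be an integer with 1 ≤ m ≤ N/2. Let t be a uniformly random subset of {1,…,N} of size m. Then for every string q ∈ 𝒜_d^N, the probability that |w(q_t) − w(q_{−t})| > δ is at most 2·exp(−δ²·m·N/(N+2)). -/
/-- Restriction of a string to the coordinates indexed by a subset `t`. -/
def restrictTo {N : ℕ} {α : Type*} (t : Finset (Fin N)) (x : Fin N → α) :
    {i : Fin N // i ∈ t} → α := fun i => x i.1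

/-- Relative Hamming weight `w(x) = |{i : x_i ≠ 0}| / |ι|`. -/
noncomputable def relWeight {d : ℕ} {ι : Type*} [Fintype ι] (x : ι → ZMod d) : ℝ :=
  ((Finset.univ.filter fun i => x i ≠ 0).card : ℝ) / (Fintype.card ι)

open Real Finset MeasureTheory ProbabilityTheory

/-!
Let `K` be the number of nonzero letters of `q` and `x = |t ∩ supp q|`, which is hypergeometric.
Then `w(q_t) - w(q_{-t}) = (N / m) Z` with `Z = (x - m K / N) / (N - m)`. Drawing the `m`
elements one at a time, `Z` is the end point of a martingale whose `k`-th increment ranges over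
an interval of length `1 / (N - 1 - k)`; conditioning on the first draw and applying Hoeffding's
lemma at each step gives `E exp (l Z) ≤ exp (l² V / 8)` with `V = ∑_{k < m} (N - 1 - k)⁻²`, and
`V ≤ 2 m (N + 2) / N³` as soon as `2 m ≤ N`. A two-sided Chernoff bound with the optimal `l`
then gives `2 exp (-2 a² / V)` for the event `|Z| > a = δ m / N`.
-/

theorem succ_mul_choose_succ_eq (n k : ℕ) :
    (k + 1) * n.choose (k + 1) = n * (n - 1).choose k := by
  cases n with
  | zero => simp
  | succ n => rw [Nat.add_sub_cancel, mul_comm, ← Nat.add_one_mul_choose_eq]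

theorem succ_mul_sum_choose_mul_choose (K L m : ℕ) (g : ℕ → ℝ) :
    (m + 1 : ℝ) * ∑ x ∈ range (m + 2), ((K.choose x * L.choose (m + 1 - x) : ℕ) : ℝ) * g x =
      K * ∑ y ∈ range (m + 1), (((K - 1).choose y * L.choose (m - y) : ℕ) : ℝ) * g (y + 1) +
      L * ∑ y ∈ range (m + 1), ((K.choose y * (L - 1).choose (m - y) : ℕ) : ℝ) * g y := by
  have hsplit : ∀ x ∈ range (m + 2),
      (m + 1 : ℝ) * (((K.choose x * L.choose (m + 1 - x) : ℕ) : ℝ) * g x) =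
        ((x * K.choose x * L.choose (m + 1 - x) : ℕ) : ℝ) * g x +
        ((K.choose x * ((m + 1 - x) * L.choose (m + 1 - x)) : ℕ) : ℝ) * g x := by
    intro x hx
    have : x ≤ m + 1 := Nat.lt_succ_iff.1 (mem_range.1 hx)
    push_cast [this]
    ring
  rw [mul_sum, sum_congr rfl hsplit, sum_add_distrib, sum_range_succ', sum_range_succ _ (m + 1)]
  simp only [zero_mul, Nat.cast_zero, add_zero, Nat.sub_self, mul_zero, mul_sum]
  congr 1
  · refine sum_congr rfl fun y _ => ?_
    rw [succ_mul_choose_succ_eq, Nat.add_sub_add_right]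
    push_cast
    ring
  · refine sum_congr rfl fun y hy => ?_
    rw [show m + 1 - y = m - y + 1 by have := mem_range.1 hy; omega, succ_mul_choose_succ_eq]
    push_cast
    ring

noncomputable def hypergeomExpect (N K m : ℕ) (g : ℕ → ℝ) : ℝ :=
  (∑ x ∈ range (m + 1), ((K.choose x * (N - K).choose (m - x) : ℕ) : ℝ) * g x) / N.choose m

noncomputable def hypergeomDev (N K m x : ℕ) : ℝ := (x - m * K / N) / (N - m)

noncomputable def hypergeomVarProxy (N m : ℕ) : ℝ := ∑ k ∈ range m, 1 / ((N : ℝ) - 1 - k) ^ 2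

section Hypergeometric

variable {N K m : ℕ}

theorem hypergeomExpect_mono {g g' : ℕ → ℝ} (h : ∀ x ≤ m, g x ≤ g' x) :
    hypergeomExpect N K m g ≤ hypergeomExpect N K m g' := by
  unfold hypergeomExpect
  gcongr with x hx
  exact h x (Nat.lt_succ_iff.1 (mem_range.1 hx))

theorem hypergeomExpect_add (g g' : ℕ → ℝ) :
    hypergeomExpect N K m (fun x => g x + g' x) =
      hypergeomExpect N K m g + hypergeomExpect N K m g' := by
  simp only [hypergeomExpect, mul_add, sum_add_distrib, add_div]

theorem hypergeomExpect_const_mul (c : ℝ) (g : ℕ → ℝ) :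
    hypergeomExpect N K m (fun x => c * g x) = c * hypergeomExpect N K m g := by
  simp only [hypergeomExpect, mul_left_comm _ c, ← mul_sum, mul_div_assoc]

-- Condition on whether the first drawn element is marked.
theorem hypergeomExpect_succ (hK : K ≤ N) (hm : m < N) (g : ℕ → ℝ) :
    hypergeomExpect N K (m + 1) g =
      K / N * hypergeomExpect (N - 1) (K - 1) m (fun y => g (y + 1)) +
      (N - K) / N * hypergeomExpect (N - 1) K m g := by
  have hC : ((m : ℝ) + 1) * N.choose (m + 1) = N * (N - 1).choose m := by
    exact_mod_cast succ_mul_choose_succ_eq N m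
  have hN : (0 : ℝ) < N := Nat.cast_pos.2 (by omega)
  have hC₀ : (0 : ℝ) < N.choose (m + 1) := Nat.cast_pos.2 (Nat.choose_pos hm)
  have hC₁ : (0 : ℝ) < (N - 1).choose m := Nat.cast_pos.2 (Nat.choose_pos (by omega))
  have hfirst : (K : ℝ) * ∑ y ∈ range (m + 1),
        (((K - 1).choose y * (N - K).choose (m - y) : ℕ) : ℝ) * g (y + 1) =
      K * ∑ y ∈ range (m + 1),
        (((K - 1).choose y * (N - 1 - (K - 1)).choose (m - y) : ℕ) : ℝ) * g (y + 1) := by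
    rcases Nat.eq_zero_or_pos K with rfl | hK0
    · simp
    · rw [show N - 1 - (K - 1) = N - K by omega]
  have key := succ_mul_sum_choose_mul_choose K (N - K) m g
  rw [hfirst, show N - K - 1 = N - 1 - K by omega, Nat.cast_sub hK] at key
  unfold hypergeomExpect
  set S := ∑ x ∈ range (m + 2), ((K.choose x * (N - K).choose (m + 1 - x) : ℕ) : ℝ) * g x
  rw [div_eq_iff hC₀.ne']
  field_simp
  linear_combination (N.choose (m + 1) : ℝ) * key - S * hC

theorem hypergeomDev_succ_succ (hK : 1 ≤ K) (hm : m + 1 < N) (y : ℕ) :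
    hypergeomDev N K (m + 1) (y + 1) =
      (1 - K / N) / (N - 1) + hypergeomDev (N - 1) (K - 1) m y := by
  have : (m : ℝ) + 1 < N := by exact_mod_cast hm
  have : (N : ℝ) - 1 - m ≠ 0 := by linarith
  have : (N : ℝ) - (m + 1) ≠ 0 := by linarith
  have : (N : ℝ) - 1 ≠ 0 := by linarith
  have : (N : ℝ) ≠ 0 := by linarith
  unfold hypergeomDev
  rw [Nat.cast_sub (show 1 ≤ N by omega), Nat.cast_sub hK]
  push_cast
  field_simp
  ring

theorem hypergeomDev_succ (hm : m + 1 < N) (y : ℕ) :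
    hypergeomDev N K (m + 1) y = -(K / N) / (N - 1) + hypergeomDev (N - 1) K m y := by
  have : (m : ℝ) + 1 < N := by exact_mod_cast hm
  have : (N : ℝ) - 1 - m ≠ 0 := by linarith
  have : (N : ℝ) - (m + 1) ≠ 0 := by linarith
  have : (N : ℝ) - 1 ≠ 0 := by linarith
  have : (N : ℝ) ≠ 0 := by linarith
  unfold hypergeomDev
  rw [Nat.cast_sub (show 1 ≤ N by omega)]
  push_cast
  field_simp
  ring

theorem hypergeomVarProxy_succ (hN : 1 ≤ N) :
    hypergeomVarProxy N (m + 1) = 1 / ((N : ℝ) - 1) ^ 2 + hypergeomVarProxy (N - 1) m := by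
  rw [hypergeomVarProxy, sum_range_succ', add_comm, hypergeomVarProxy, Nat.cast_sub hN]
  push_cast
  ring_nf

theorem hypergeomVarProxy_pos (hm : 0 < m) (hmN : m < N) : 0 < hypergeomVarProxy N m := by
  refine sum_pos (fun k hk => ?_) ⟨0, mem_range.2 hm⟩
  have : (k : ℝ) + 1 < N := by exact_mod_cast (show k + 1 < N by have := mem_range.1 hk; omega)
  have : (0 : ℝ) < N - 1 - k := by linarith
  positivity

theorem hypergeomVarProxy_le_div (hmN : m < N) :
    hypergeomVarProxy N m ≤ m / ((N - m - 1 / 2) * (N - 1 / 2)) := by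
  have hmN' : (m : ℝ) + 1 ≤ N := by exact_mod_cast hmN
  set g : ℕ → ℝ := fun k => 1 / ((N : ℝ) - k - 1 / 2)
  -- `1 / n ^ 2 ≤ 1 / (n ^ 2 - 1 / 4) = 1 / (n - 1 / 2) - 1 / (n + 1 / 2)`
  have hstep : ∀ k ∈ range m, 1 / ((N : ℝ) - 1 - k) ^ 2 ≤ g (k + 1) - g k := by
    intro k hk
    have : (k : ℝ) + 1 ≤ m := by exact_mod_cast mem_range.1 hk
    have hn : (1 : ℝ) ≤ N - 1 - k := by linarith
    simp only [g]
    push_cast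
    rw [div_sub_div _ _ (by linarith) (by linarith), div_le_div_iff₀ (by positivity) (by nlinarith)]
    nlinarith
  calc hypergeomVarProxy N m ≤ ∑ k ∈ range m, (g (k + 1) - g k) := sum_le_sum hstep
    _ = g m - g 0 := sum_range_sub g m
    _ = m / ((N - m - 1 / 2) * (N - 1 / 2)) := by
        simp only [g, Nat.cast_zero, sub_zero]
        rw [div_sub_div _ _ (by linarith) (by linarith)]
        ring

theorem hypergeomVarProxy_le (hm : 1 ≤ m) (hm2 : 2 * m ≤ N) :
    hypergeomVarProxy N m ≤ 2 * m * (N + 2) / N ^ 3 := by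
  rcases lt_or_ge N 5 with hN | hN
  · have : m ≤ 2 := by omega
    interval_cases m <;> interval_cases N <;> norm_num [hypergeomVarProxy, sum_range_succ]
  have hN' : (5 : ℝ) ≤ N := by exact_mod_cast hN
  have hm2' : 2 * (m : ℝ) ≤ N := by exact_mod_cast hm2
  have hm' : (1 : ℝ) ≤ m := by exact_mod_cast hm
  refine (hypergeomVarProxy_le_div (by omega)).trans ?_
  rw [div_le_div_iff₀ (by nlinarith) (by positivity)]
  -- `N - m - 1 / 2 ≥ (N - 1) / 2` and `(N + 2) (N - 1) (N - 1 / 2) ≥ N ^ 3` once `N ≥ 5`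
  nlinarith [mul_nonneg (mul_nonneg (by linarith : (0 : ℝ) ≤ m) (by linarith : (0 : ℝ) ≤ N - 2 * m))
      (mul_nonneg (by linarith : (0 : ℝ) ≤ N + 2) (by linarith : (0 : ℝ) ≤ N - 1 / 2)),
    mul_nonneg (by linarith : (0 : ℝ) ≤ N - 5) (by linarith : (0 : ℝ) ≤ N)]

theorem two_point_mgf_le {p : ℝ} (hp0 : 0 ≤ p) (hp1 : p ≤ 1) (t : ℝ) :
    p * exp ((1 - p) * t) + (1 - p) * exp (-(p * t)) ≤ exp (t ^ 2 / 8) := by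
  let P : unitInterval := ⟨p, hp0, hp1⟩
  have hP : (P : ℝ) = p := rfl
  have hsupp : ∀ᵐ x ∂Ber(1 - p, -p, P), x ∈ Set.Icc (-p) (1 - p) := by
    rw [ae_iff, ← Set.compl_def,
      bernoulliMeasure_apply_of_notMem_of_notMem _ measurableSet_Icc.compl] <;> simp
  have hmean : ∫ x, x ∂Ber(1 - p, -p, P) = 0 := by
    rw [integral_bernoulliMeasure, hP, smul_eq_mul, smul_eq_mul]
    ring
  calc p * exp ((1 - p) * t) + (1 - p) * exp (-(p * t)) = mgf id Ber(1 - p, -p, P) t := by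
        rw [mgf, integral_bernoulliMeasure, hP, smul_eq_mul, smul_eq_mul, id, id]
        ring_nf
    _ ≤ exp ((‖1 - p - -p‖₊ / 2) ^ 2 * t ^ 2 / 2) :=
        (hasSubgaussianMGF_of_mem_Icc_of_integral_eq_zero aemeasurable_id hsupp hmean).mgf_le t
    _ = exp (t ^ 2 / 8) := by
        rw [show 1 - p - -p = 1 by ring]
        norm_num
        ring_nf

theorem hypergeomExpect_exp_le (l : ℝ) (hm : m < N) (hK : K ≤ N) :
    hypergeomExpect N K m (fun x => exp (l * hypergeomDev N K m x)) ≤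
      exp (l ^ 2 / 8 * hypergeomVarProxy N m) := by
  induction m generalizing N K with
  | zero => simp [hypergeomExpect, hypergeomDev, hypergeomVarProxy]
  | succ m ih =>
    set p : ℝ := K / N
    set t : ℝ := l / (N - 1)
    set E : ℝ := exp (l ^ 2 / 8 * hypergeomVarProxy (N - 1) m)
    have hp0 : 0 ≤ p := by positivity
    have hp1 : p ≤ 1 := div_le_one_of_le₀ (by exact_mod_cast hK) (Nat.cast_nonneg _)
    have hmarked : p * hypergeomExpect (N - 1) (K - 1) m
        (fun y => exp (l * hypergeomDev N K (m + 1) (y + 1))) ≤ p * (exp ((1 - p) * t) * E) := by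
      rcases Nat.eq_zero_or_pos K with hK0 | hK0
      · simp [p, hK0]
      gcongr
      simp only [hypergeomDev_succ_succ hK0 hm, mul_add, exp_add, hypergeomExpect_const_mul]
      rw [show l * ((1 - p) / (N - 1)) = (1 - p) * t by ring]
      gcongr
      exact ih (by omega) (by omega)
    have hunmarked : (1 - p) * hypergeomExpect (N - 1) K m
        (fun y => exp (l * hypergeomDev N K (m + 1) y)) ≤ (1 - p) * (exp (-(p * t)) * E) := by
      rcases hK.eq_or_lt with hKN | hKN
      · simp [p, hKN, show (N : ℝ) ≠ 0 by exact_mod_cast (show N ≠ 0 by omega)]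
      gcongr
      simp only [hypergeomDev_succ hm, mul_add, exp_add, hypergeomExpect_const_mul]
      rw [show l * (-(K / N) / (N - 1)) = -(p * t) by ring]
      gcongr
      exact ih (by omega) (by omega)
    calc hypergeomExpect N K (m + 1) (fun x => exp (l * hypergeomDev N K (m + 1) x))
        = p * hypergeomExpect (N - 1) (K - 1) m
            (fun y => exp (l * hypergeomDev N K (m + 1) (y + 1))) +
          (1 - p) * hypergeomExpect (N - 1) K m
            (fun y => exp (l * hypergeomDev N K (m + 1) y)) := by
          rw [hypergeomExpect_succ hK (by omega), sub_div, div_self]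
          exact_mod_cast (show N ≠ 0 by omega)
      _ ≤ (p * exp ((1 - p) * t) + (1 - p) * exp (-(p * t))) * E := by linarith
      _ ≤ exp (t ^ 2 / 8) * E := by gcongr; exact two_point_mgf_le hp0 hp1 t
      _ = exp (l ^ 2 / 8 * hypergeomVarProxy N (m + 1)) := by
          rw [← exp_add, hypergeomVarProxy_succ (by omega)]
          simp only [t, div_pow]
          congr 1
          ring

theorem ite_lt_abs_le_exp {l : ℝ} (hl : 0 ≤ l) (a z : ℝ) :
    (if a < |z| then 1 else 0 : ℝ) ≤ exp (-(l * a)) * (exp (l * z) + exp (-(l * z))) := by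
  split_ifs with h
  · rw [mul_add, ← exp_add, ← exp_add]
    rcases lt_abs.1 h with h | h
    · have : 1 ≤ exp (-(l * a) + l * z) := one_le_exp (by nlinarith)
      linarith [exp_pos (-(l * a) + -(l * z))]
    · have : 1 ≤ exp (-(l * a) + -(l * z)) := one_le_exp (by nlinarith)
      linarith [exp_pos (-(l * a) + l * z)]
  · positivity

theorem hypergeomExpect_tail_le (hm : 0 < m) (hmN : m < N) (hK : K ≤ N) {a : ℝ} (ha : 0 ≤ a) :
    hypergeomExpect N K m (fun x => if a < |hypergeomDev N K m x| then 1 else 0) ≤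
      2 * exp (-(2 * a ^ 2 / hypergeomVarProxy N m)) := by
  set V := hypergeomVarProxy N m
  have hV : 0 < V := hypergeomVarProxy_pos hm hmN
  -- the Chernoff parameter `l` minimises `l ^ 2 * V / 8 - l * a`
  set l := 4 * a / V
  calc hypergeomExpect N K m (fun x => if a < |hypergeomDev N K m x| then 1 else 0)
      ≤ hypergeomExpect N K m (fun x => exp (-(l * a)) *
          (exp (l * hypergeomDev N K m x) + exp (-l * hypergeomDev N K m x))) :=
        hypergeomExpect_mono fun x _ => by
          rw [neg_mul]
          exact ite_lt_abs_le_exp (by positivity) a _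
    _ = exp (-(l * a)) * (hypergeomExpect N K m (fun x => exp (l * hypergeomDev N K m x)) +
          hypergeomExpect N K m (fun x => exp (-l * hypergeomDev N K m x))) := by
        rw [hypergeomExpect_const_mul, hypergeomExpect_add]
    _ ≤ exp (-(l * a)) * (exp (l ^ 2 / 8 * V) + exp ((-l) ^ 2 / 8 * V)) := by
        gcongr <;> exact hypergeomExpect_exp_le _ hmN hK
    _ = 2 * exp (-(2 * a ^ 2 / V)) := by
        rw [neg_sq, ← two_mul, mul_left_comm, ← exp_add]
        congr 2
        simp only [l]
        field_simp
        ring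

theorem hypergeomExpect_tail_le_of_two_mul_le (hm : 1 ≤ m) (hm2 : 2 * m ≤ N) (hK : K ≤ N)
    {δ : ℝ} (hδ : 0 ≤ δ) :
    hypergeomExpect N K m (fun x => if δ < |N / m * hypergeomDev N K m x| then 1 else 0) ≤
      2 * exp (-(δ ^ 2) * m * N / (N + 2)) := by
  have hm' : (0 : ℝ) < m := by exact_mod_cast hm
  have hN : (0 : ℝ) < N := by exact_mod_cast (show 0 < N by omega)
  have hV := hypergeomVarProxy_pos hm (show m < N by omega)
  have hcond : ∀ x, δ < |N / m * hypergeomDev N K m x| ↔ δ * m / N < |hypergeomDev N K m x| :=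
    fun x => by
      rw [abs_mul, abs_of_pos (by positivity), div_lt_iff₀ hN, div_mul_eq_mul_div,
        lt_div_iff₀ hm']
      constructor <;> intro h <;> linarith
  simp_rw [hcond]
  refine (hypergeomExpect_tail_le hm (by omega) hK (by positivity)).trans ?_
  gcongr
  rw [neg_mul, neg_mul, neg_div, neg_le_neg_iff, div_le_div_iff₀ (by positivity) hV]
  calc δ ^ 2 * m * N * hypergeomVarProxy N m
      ≤ δ ^ 2 * m * N * (2 * m * (N + 2) / N ^ 3) := by
        gcongr
        exact hypergeomVarProxy_le hm hm2
    _ = 2 * (δ * m / N) ^ 2 * (N + 2) := by field_simp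

end Hypergeometric

theorem card_filter_card_inter_eq {α : Type*} [Fintype α] [DecidableEq α] (S : Finset α)
    {m x : ℕ} (hx : x ≤ m) :
    #(univ.filter fun t : Finset α => #t = m ∧ #(t ∩ S) = x) =
      (#S).choose x * (#Sᶜ).choose (m - x) := by
  rw [← card_powersetCard, ← card_powersetCard, ← card_product]
  refine card_nbij' (fun t => (t ∩ S, t \ S)) (fun p => p.1 ∪ p.2) ?_ ?_ ?_ ?_
  · intro t ht
    simp only [coe_filter, mem_univ, true_and, Set.mem_ofPred_eq] at ht
    have := card_inter_add_card_sdiff t S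
    rw [sdiff_eq_inter_compl] at this
    simp only [coe_product, Set.mem_prod, mem_coe, mem_powersetCard, sdiff_eq_inter_compl]
    exact ⟨⟨inter_subset_right, ht.2⟩, inter_subset_right, by omega⟩
  · rintro ⟨A, B⟩ h
    simp only [coe_product, Set.mem_prod, mem_coe, mem_powersetCard] at h
    obtain ⟨⟨hA, rfl⟩, hB, hBc⟩ := h
    have hBS := subset_compl_iff_disjoint_right.1 hB
    have hAB : Disjoint A B := disjoint_of_subset_left hA hBS.symm
    simp only [coe_filter, mem_univ, true_and, Set.mem_ofPred_eq, card_union_of_disjoint hAB,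
      union_inter_distrib_right, inter_eq_left.2 hA, disjoint_iff_inter_eq_empty.1 hBS,
      union_empty, and_true]
    omega
  · exact fun t _ => (union_comm _ _).trans (sdiff_union_inter t S)
  · rintro ⟨A, B⟩ h
    simp only [coe_product, Set.mem_prod, mem_coe, mem_powersetCard] at h
    have hBS := subset_compl_iff_disjoint_right.1 h.2.1
    simp only [union_inter_distrib_right, inter_eq_left.2 h.1.1, disjoint_iff_inter_eq_empty.1 hBS,
      union_empty, union_sdiff_distrib, sdiff_eq_empty_iff_subset.2 h.1.1, empty_union,
      sdiff_eq_self_of_disjoint hBS]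

theorem card_filter_card_inter_div_choose {α : Type*} [Fintype α] [DecidableEq α]
    (S : Finset α) (m : ℕ) (P : ℕ → Prop) [DecidablePred P] :
    (#(univ.filter fun t : Finset α => #t = m ∧ P #(t ∩ S)) : ℝ) / (Fintype.card α).choose m =
      hypergeomExpect (Fintype.card α) #S m (fun x => if P x then 1 else 0) := by
  have hmaps : ∀ t ∈ univ.filter (fun t : Finset α => #t = m ∧ P #(t ∩ S)),
      #(t ∩ S) ∈ range (m + 1) := fun t ht =>
    mem_range_succ_iff.2 ((card_le_card inter_subset_left).trans (mem_filter.1 ht).2.1.le)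
  rw [hypergeomExpect, card_eq_sum_card_fiberwise hmaps, Nat.cast_sum]
  congr 1
  refine sum_congr rfl fun x hx => ?_
  rw [filter_filter, ← card_compl]
  split_ifs with hP
  · rw [mul_one, ← card_filter_card_inter_eq S (mem_range_succ_iff.1 hx)]
    congr 2
    ext t
    simp only [mem_filter, mem_univ, true_and]
    exact ⟨fun h => ⟨h.1.1, h.2⟩, fun h => ⟨⟨h.1, h.2 ▸ hP⟩, h.2⟩⟩
  · rw [mul_zero, Nat.cast_eq_zero, card_eq_zero, filter_eq_empty_iff]
    exact fun t _ h => hP (h.2 ▸ h.1.2)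

theorem relWeight_restrictTo {d N : ℕ} (q : Fin N → ZMod d) (t : Finset (Fin N)) :
    relWeight (restrictTo t q) = #(t.filter fun i => q i ≠ 0) / #t := by
  rw [relWeight, Fintype.card_coe, univ_eq_attach]
  change (#(t.attach.filter fun i : t => q i ≠ 0) : ℝ) / #t = _
  rw [filter_attach (fun i => q i ≠ 0) t, card_map, card_attach]

theorem relWeight_restrictTo_sub_compl {d N m : ℕ} (q : Fin N → ZMod d) {t : Finset (Fin N)}
    (ht : #t = m) (hm : 0 < m) (hmN : m < N) :
    relWeight (restrictTo t q) - relWeight (restrictTo tᶜ q) =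
      N / m * hypergeomDev N #(univ.filter fun i => q i ≠ 0) m
        #(t ∩ univ.filter fun i => q i ≠ 0) := by
  set S := univ.filter fun i => q i ≠ 0
  have hfilter : ∀ s : Finset (Fin N), s.filter (fun i => q i ≠ 0) = s ∩ S := fun s => by
    ext
    simp [S]
  have hsplit : (#(t ∩ S) : ℝ) + #(tᶜ ∩ S) = #S := by
    rw [inter_comm, inter_comm tᶜ, ← sdiff_eq_inter_compl]
    exact_mod_cast card_inter_add_card_sdiff S t
  have hm' : (0 : ℝ) < m := by exact_mod_cast hm
  have hmN' : (m : ℝ) < N := by exact_mod_cast hmN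
  have : (N : ℝ) - m ≠ 0 := by linarith
  have : (N : ℝ) ≠ 0 := by linarith
  rw [relWeight_restrictTo, relWeight_restrictTo, hfilter, hfilter, card_compl, ht,
    Fintype.card_fin, Nat.cast_sub hmN.le, hypergeomDev, ← hsplit]
  field_simp
  ring

theorem sampling_bound_single_general (d N m : ℕ)
    (hm : 1 ≤ m) (hm2 : 2 * m ≤ N) (δ : ℝ) (hδ : 0 < δ) (q : Fin N → ZMod d) :
    (Nat.card {t : Finset (Fin N) //
        t.card = m ∧ δ < |relWeight (restrictTo t q) - relWeight (restrictTo tᶜ q)|} : ℝ)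
      / (N.choose m : ℝ)
      ≤ 2 * Real.exp (-(δ ^ 2) * m * N / (N + 2)) := by
  classical
  set S := univ.filter fun i => q i ≠ 0
  have hevent : (univ.filter fun t : Finset (Fin N) =>
        #t = m ∧ δ < |relWeight (restrictTo t q) - relWeight (restrictTo tᶜ q)|) =
      univ.filter fun t => #t = m ∧ δ < |N / m * hypergeomDev N #S m #(t ∩ S)| :=
    filter_congr fun t _ => and_congr_right fun ht => by
      rw [relWeight_restrictTo_sub_compl q ht (by omega) (by omega)]
  have hprob := card_filter_card_inter_div_choose S m
    (fun x => δ < |N / m * hypergeomDev N #S m x|)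
  rw [Fintype.card_fin] at hprob
  rw [Nat.card_eq_fintype_card, Fintype.card_subtype, hevent, hprob]
  exact hypergeomExpect_tail_le_of_two_mul_le hm hm2
    ((card_le_univ S).trans_eq (Fintype.card_fin N)) hδ.le

/-- **Classical sampling bound (single string).**
Let `d ≥ 2`, `N ≥ 2`, `δ > 0`, `1 ≤ m ≤ N/2`.  If a subset `t ⊆ {1,…,N}` of size `m` is
chosen uniformly at random, then for every `q ∈ 𝒜_d^N`, the probability that
`|w(q_t) - w(q_{-t})| > δ` is at most `2·exp(-δ²·m·N/(N+2))`. -/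
theorem sampling_bound_single (d N m : ℕ) (hd : 2 ≤ d) (hN : 2 ≤ N)
    (hm : 1 ≤ m) (hm2 : 2 * m ≤ N) (δ : ℝ) (hδ : 0 < δ) (q : Fin N → ZMod d) :
    (Nat.card {t : Finset (Fin N) //
        t.card = m ∧ δ < |relWeight (restrictTo t q) - relWeight (restrictTo tᶜ q)|} : ℝ)
      / (N.choose m : ℝ)
      ≤ 2 * Real.exp (-(δ ^ 2) * m * N / (N + 2)) :=
  sampling_bound_single_general d N m hm hm2 δ hδ q
end

section
/- Let d ≥ 2, p ≥ 1, N ≥ 2, δ > 0, and let m be an integer with 1 ≤ m ≤ N/2. Let t be a uniformly random subset of {1,…,N} of size m. Then for every tuple q = (q⁰,…,q^p) of p+1 strings in 𝒜_d^N, the probability that |w(s(q_t)) − w(s(q_{−t}))| > δ is at most 2·exp(−δ²·m·N/(N+2)). In particular, the error probability ε^cl = max_q Pr_t(|w(s(q_t)) − w(s(q_{−t}))| > δ) of the multiparty sampling strategy satisfies ε^cl ≤ 2·exp(−δ²·m·N/(N+2)). -/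
/-- The blockwise sum `s(q)` of a `(p+1)`-tuple of strings over `ZMod d`:
`s(q)_i = q⁰_i + q¹_i + ⋯ + q^p_i` in `ZMod d`. -/
def blockSum {d p : ℕ} {ι : Type*} (q : Fin (p + 1) → ι → ZMod d) : ι → ZMod d :=
  fun i => ∑ j, q j i

open Finset Real

lemma bernoulli_hoeffding (q : ℝ) (hq0 : 0 ≤ q) (hq1 : q ≤ 1) (t : ℝ) (ht : 0 ≤ t) :
    1 - q + q * Real.exp t ≤ Real.exp (q * t + t ^ 2 / 8) := by
  set g : ℝ → ℝ := fun x => 1 - q + q * Real.exp x with hg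
  have hgpos : ∀ x, 0 ≤ x → 1 ≤ g x := by
    intro x hx
    have h1 : 1 ≤ Real.exp x := Real.one_le_exp hx
    have := mul_le_mul_of_nonneg_left h1 hq0
    simp only [mul_one] at this
    simp only [hg]; linarith
  have hgd : ∀ x, HasDerivAt g (q * Real.exp x) x := by
    intro x
    exact ((Real.hasDerivAt_exp x).const_mul q).const_add (1 - q)
  set f : ℝ → ℝ := fun x => q * x + x ^ 2 / 8 - Real.log (g x) with hf
  set f' : ℝ → ℝ := fun x => q + x / 4 - q * Real.exp x / g x with hf'
  have hfd : ∀ x, 0 < g x → HasDerivAt f (f' x) x := by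
    intro x hgx
    have h1 : HasDerivAt (fun x : ℝ => q * x) q x := by
      simpa using (hasDerivAt_id x).const_mul q
    have h2 : HasDerivAt (fun x : ℝ => x ^ 2 / 8) (x / 4) x := by
      have := (hasDerivAt_pow 2 x).div_const 8
      simpa using this.congr_deriv (by ring)
    have h3 : HasDerivAt (fun x => Real.log (g x)) (q * Real.exp x / g x) x :=
      (hgd x).log (ne_of_gt hgx)
    exact (h1.add h2).sub h3
  have hf'd : ∀ x, 0 < g x →
      HasDerivAt f' (1 / 4 - q * Real.exp x * (1 - q) / (g x) ^ 2) x := by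
    intro x hgx
    have h2 : HasDerivAt (fun x : ℝ => q + x / 4) (1 / 4) x := by
      simpa using ((hasDerivAt_id x).div_const 4).const_add q
    have h3 : HasDerivAt (fun x => q * Real.exp x / g x)
        ((q * Real.exp x * g x - q * Real.exp x * (q * Real.exp x)) / (g x) ^ 2) x :=
      ((Real.hasDerivAt_exp x).const_mul q).div (hgd x) (ne_of_gt hgx)
    have h4 := h2.sub h3
    apply h4.congr_deriv
    field_simp
    simp only [hg]; ring
  have hgpos2 : ∀ x, 0 < g x := by
    intro x
    rcases lt_or_eq_of_le hq1 with h | h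
    · have : 0 ≤ q * Real.exp x := mul_nonneg hq0 (Real.exp_pos x).le
      simp only [hg]; linarith
    · subst h; simp only [hg]; simpa using Real.exp_pos x
  -- f' is monotone
  have hf'mono : Monotone f' := by
    apply monotone_of_deriv_nonneg
    · intro x; exact (hf'd x (hgpos2 x)).differentiableAt
    · intro x
      rw [(hf'd x (hgpos2 x)).deriv]
      have hA : 0 ≤ q * Real.exp x := mul_nonneg hq0 (Real.exp_pos x).le
      have hB : 0 ≤ 1 - q := by linarith
      have hgx : g x = (1 - q) + q * Real.exp x := rfl
      have h4 : 4 * ((q * Real.exp x) * (1 - q)) ≤ (g x) ^ 2 := by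
        rw [hgx]; nlinarith [sq_nonneg (q * Real.exp x - (1 - q))]
      have hg2 : (0:ℝ) < (g x) ^ 2 := pow_pos (hgpos2 x) 2
      rw [sub_nonneg, div_le_iff₀ hg2]
      nlinarith [h4]
  have hf'0 : f' 0 = 0 := by
    simp only [hf']
    have : g 0 = 1 := by simp [hg]
    rw [this]; simp
  have hf'nonneg : ∀ x, 0 ≤ x → 0 ≤ f' x := by
    intro x hx
    calc (0:ℝ) = f' 0 := hf'0.symm
    _ ≤ f' x := hf'mono hx
  have hfmono : MonotoneOn f (Set.Ici 0) := by
    apply monotoneOn_of_deriv_nonneg (convex_Ici 0)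
    · exact fun x _ => ((hfd x (hgpos2 x)).continuousAt).continuousWithinAt
    · intro x _
      exact (hfd x (hgpos2 x)).differentiableAt.differentiableWithinAt
    · intro x hx
      rw [interior_Ici] at hx
      rw [(hfd x (hgpos2 x)).deriv]
      exact hf'nonneg x (le_of_lt hx)
  have hf0 : f 0 = 0 := by
    have : g 0 = 1 := by simp [hg]
    simp only [hf, this]; simp
  have hft : 0 ≤ f t := by
    calc (0:ℝ) = f 0 := hf0.symm
    _ ≤ f t := hfmono Set.self_mem_Ici (Set.mem_Ici.mpr ht) ht
  have hlog : Real.log (g t) ≤ q * t + t ^ 2 / 8 := by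
    simp only [hf] at hft; linarith
  have := (Real.log_le_iff_le_exp (hgpos2 t)).mp hlog
  simpa [hg] using this

lemma inner_sum_eq {N : ℕ} (t S : Finset (Fin N)) (l : ℝ) :
    ∑ i ∈ tᶜ, Real.exp (l * (((insert i t) ∩ S).card : ℝ))
      = ((tᶜ ∩ S).card : ℝ) * Real.exp (l * (((t ∩ S).card : ℝ) + 1))
        + ((tᶜ \ S).card : ℝ) * Real.exp (l * ((t ∩ S).card : ℝ)) := by
  rw [← Finset.sum_filter_add_sum_filter_not tᶜ (· ∈ S)]
  have h1 : ∀ i ∈ tᶜ.filter (· ∈ S),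
      Real.exp (l * (((insert i t) ∩ S).card : ℝ))
        = Real.exp (l * (((t ∩ S).card : ℝ) + 1)) := by
    intro i hi
    simp only [Finset.mem_filter, Finset.mem_compl] at hi
    rw [Finset.insert_inter_of_mem hi.2,
      Finset.card_insert_of_notMem (fun h => hi.1 (Finset.mem_inter.mp h).1)]
    push_cast; ring_nf
  have h2 : ∀ i ∈ tᶜ.filter (¬ · ∈ S),
      Real.exp (l * (((insert i t) ∩ S).card : ℝ))
        = Real.exp (l * ((t ∩ S).card : ℝ)) := by
    intro i hi
    simp only [Finset.mem_filter, Finset.mem_compl] at hi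
    rw [Finset.insert_inter_of_notMem hi.2]
  have h3 : tᶜ.filter (fun i => ¬ i ∈ S) = tᶜ \ S := by
    ext i; simp [Finset.mem_sdiff]
  rw [Finset.sum_congr rfl h1, Finset.sum_congr rfl h2, Finset.sum_const, Finset.sum_const,
    Finset.filter_mem_eq_inter, h3, nsmul_eq_mul, nsmul_eq_mul]


lemma exchange_identity {α : Type*} [DecidableEq α] [Fintype α] (m : ℕ) (f : Finset α → ℝ) :
    ∑ t ∈ powersetCard (m+1) (univ : Finset α), ((m:ℝ)+1) * f t
      = ∑ t ∈ powersetCard m (univ : Finset α), ∑ i ∈ tᶜ, f (insert i t) := by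
  have lhs_eq : ∀ t ∈ powersetCard (m+1) (univ : Finset α),
      ((m:ℝ)+1) * f t = ∑ i ∈ t, f t := by
    intro t ht
    rw [Finset.sum_const, Finset.mem_powersetCard_univ.mp ht]
    push_cast; ring
  rw [Finset.sum_congr rfl lhs_eq, Finset.sum_sigma', Finset.sum_sigma']
  apply Finset.sum_nbij' (fun p => (⟨p.1.erase p.2, p.2⟩ : Σ _ : Finset α, α))
    (fun p => (⟨insert p.2 p.1, p.2⟩ : Σ _ : Finset α, α))
  · rintro ⟨t, i⟩ hp
    simp only [Finset.mem_sigma, Finset.mem_powersetCard_univ] at hp ⊢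
    refine ⟨?_, ?_⟩
    · rw [Finset.card_erase_of_mem hp.2, hp.1]; rfl
    · simp [Finset.mem_compl]
  · rintro ⟨t, i⟩ hp
    simp only [Finset.mem_sigma, Finset.mem_powersetCard_univ, Finset.mem_compl] at hp ⊢
    refine ⟨?_, ?_⟩
    · rw [Finset.card_insert_of_notMem hp.2, hp.1]
    · simp
  · rintro ⟨t, i⟩ hp
    simp only [Finset.mem_sigma, Finset.mem_powersetCard_univ] at hp
    simp [Finset.insert_erase hp.2]
  · rintro ⟨t, i⟩ hp
    simp only [Finset.mem_sigma, Finset.mem_powersetCard_univ, Finset.mem_compl] at hp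
    simp [Finset.erase_insert hp.2]
  · rintro ⟨t, i⟩ hp
    simp only [Finset.mem_sigma, Finset.mem_powersetCard_univ] at hp
    simp [Finset.insert_erase hp.2]

lemma mgf_bound {N : ℕ} (S : Finset (Fin N)) :
    ∀ m : ℕ, m ≤ N → ∀ l : ℝ, 0 ≤ l →
    ∑ t ∈ powersetCard m (univ : Finset (Fin N)), Real.exp (l * ((t ∩ S).card : ℝ))
      ≤ (N.choose m : ℝ) *
        Real.exp (l * m * S.card / N + l ^ 2 * (m * ((N : ℝ) - m + 1)) / (8 * N)) := by
  intro m
  induction m with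
  | zero => intro _ l _; simp
  | succ m ih =>
    intro hm1 l hl
    have hmN : m ≤ N := Nat.le_of_succ_le hm1
    set k : ℝ := (S.card : ℝ) with hk
    set r : ℝ := (N : ℝ) - m with hrdef
    have hr1 : 1 ≤ r := by
      have : (m:ℝ) + 1 ≤ N := by exact_mod_cast hm1
      simp only [hrdef]; linarith
    have hr0 : r ≠ 0 := by linarith
    have hrpos : 0 < r := by linarith
    have hN1 : (1:ℝ) ≤ N := by
      have : (1:ℕ) ≤ N := le_trans (Nat.succ_le_succ (Nat.zero_le m)) hm1
      exact_mod_cast this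
    have hNpos : (0:ℝ) < N := by linarith
    have hN0 : (N:ℝ) ≠ 0 := ne_of_gt hNpos
    have hNrm : (N:ℝ) = r + m := by simp only [hrdef]; ring
    set μ : ℝ := l * (r - 1) / r with hμdef
    have hμ0 : 0 ≤ μ := by
      apply div_nonneg (mul_nonneg hl (by linarith)) (le_of_lt hrpos)
    -- Step B : pointwise bound of the inner sum
    have stepB : ∀ t ∈ powersetCard m (univ : Finset (Fin N)),
        ∑ i ∈ tᶜ, Real.exp (l * (((insert i t) ∩ S).card : ℝ))
          ≤ r * Real.exp (l ^ 2 / 8 + l * k / r) * Real.exp (μ * ((t ∩ S).card : ℝ)) := by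
      intro t ht
      have htcard : t.card = m := Finset.mem_powersetCard_univ.mp ht
      set X : ℝ := ((t ∩ S).card : ℝ) with hX
      have hcompl_card : ((tᶜ.card : ℕ) : ℝ) = r := by
        rw [Finset.card_compl, htcard, Fintype.card_fin, Nat.cast_sub hmN]
      have hints : tᶜ ∩ S = S \ t := by
        ext i; simp [Finset.mem_sdiff, Finset.mem_compl]; tauto
      have hcS : ((tᶜ ∩ S).card : ℝ) = k - X := by
        have h := Finset.card_sdiff_add_card_inter S t
        rw [hints]
        have : (S ∩ t) = (t ∩ S) := Finset.inter_comm S t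
        rw [this] at h
        have := congrArg (fun n : ℕ => (n : ℝ)) h
        push_cast at this
        simp only [hk, hX]; linarith
      have hdS : ((tᶜ \ S).card : ℝ) = r - (k - X) := by
        have h := Finset.card_sdiff_add_card_inter tᶜ S
        have := congrArg (fun n : ℕ => (n : ℝ)) h
        push_cast at this
        rw [← hcompl_card]
        push_cast
        rw [← hcS]; push_cast; linarith
      have hq0 : 0 ≤ (k - X) / r := by
        apply div_nonneg _ (le_of_lt hrpos)
        have : 0 ≤ ((tᶜ ∩ S).card : ℝ) := Nat.cast_nonneg _
        linarith [hcS ▸ this]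
      have hq1 : (k - X) / r ≤ 1 := by
        rw [div_le_one hrpos]
        have : 0 ≤ ((tᶜ \ S).card : ℝ) := Nat.cast_nonneg _
        linarith [hdS ▸ this]
      rw [inner_sum_eq t S l, hcS, hdS]
      have key := bernoulli_hoeffding ((k - X)/r) hq0 hq1 l hl
      have hexp : (k - X) * Real.exp (l * (X + 1)) + (r - (k - X)) * Real.exp (l * X)
          = r * Real.exp (l * X) * (1 - (k - X)/r + (k - X)/r * Real.exp l) := by
        rw [show l * (X + 1) = l * X + l by ring, Real.exp_add]
        field_simp
        ring
      rw [hexp]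
      have h2 : r * Real.exp (l * X) * (1 - (k - X)/r + (k - X)/r * Real.exp l)
          ≤ r * Real.exp (l * X) * Real.exp ((k - X)/r * l + l ^ 2 / 8) := by
        apply mul_le_mul_of_nonneg_left key
        positivity
      apply le_trans h2
      apply le_of_eq
      have harg : l * X + ((k - X) / r * l + l ^ 2 / 8)
          = (l ^ 2 / 8 + l * k / r) + μ * X := by
        simp only [hμdef]
        field_simp
        ring
      calc r * Real.exp (l * X) * Real.exp ((k - X) / r * l + l ^ 2 / 8)
          = r * (Real.exp (l * X) * Real.exp ((k - X) / r * l + l ^ 2 / 8)) := by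
            rw [mul_assoc]
        _ = r * Real.exp (l * X + ((k - X) / r * l + l ^ 2 / 8)) := by
            rw [← Real.exp_add]
        _ = r * Real.exp ((l ^ 2 / 8 + l * k / r) + μ * X) := by rw [harg]
        _ = r * Real.exp (l ^ 2 / 8 + l * k / r) * Real.exp (μ * X) := by
            rw [Real.exp_add, mul_assoc]
    -- Step A+C : sum over all t
    have hchain : ((m:ℝ)+1) *
        ∑ t ∈ powersetCard (m+1) (univ : Finset (Fin N)), Real.exp (l * ((t ∩ S).card : ℝ))
        ≤ r * Real.exp (l ^ 2 / 8 + l * k / r) *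
          ((N.choose m : ℝ) * Real.exp (μ * m * k / N + μ ^ 2 * (m * ((N : ℝ) - m + 1)) / (8 * N))) := by
      rw [Finset.mul_sum]
      rw [exchange_identity m (fun t => Real.exp (l * ((t ∩ S).card : ℝ)))]
      calc ∑ t ∈ powersetCard m (univ : Finset (Fin N)), ∑ i ∈ tᶜ,
            Real.exp (l * (((insert i t) ∩ S).card : ℝ))
          ≤ ∑ t ∈ powersetCard m (univ : Finset (Fin N)),
            r * Real.exp (l ^ 2 / 8 + l * k / r) * Real.exp (μ * ((t ∩ S).card : ℝ)) :=
            Finset.sum_le_sum stepB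
        _ = r * Real.exp (l ^ 2 / 8 + l * k / r) *
            ∑ t ∈ powersetCard m (univ : Finset (Fin N)), Real.exp (μ * ((t ∩ S).card : ℝ)) := by
            rw [Finset.mul_sum]
        _ ≤ r * Real.exp (l ^ 2 / 8 + l * k / r) *
            ((N.choose m : ℝ) * Real.exp (μ * m * k / N + μ ^ 2 * (m * ((N : ℝ) - m + 1)) / (8 * N))) := by
            apply mul_le_mul_of_nonneg_left (ih hmN μ hμ0)
            positivity
    -- choose identity
    have hchoose : ((m:ℝ)+1) * (N.choose (m+1) : ℝ) = (N.choose m : ℝ) * r := by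
      have h := Nat.choose_succ_right_eq N m
      have := congrArg (fun n : ℕ => (n : ℝ)) h
      push_cast [Nat.cast_sub hmN] at this
      simp only [hrdef]; linarith
    -- exponent inequality
    have hpoly : (N:ℝ) * r^2 + m * (r-1)^2 * (r+1) ≤ (m+1) * r^3 := by
      rw [hNrm]
      nlinarith [mul_nonneg (Nat.cast_nonneg m : (0:ℝ) ≤ m) (sub_nonneg.mpr hr1)]
    have hvar : l ^ 2 / 8 + μ ^ 2 * (m * ((N : ℝ) - m + 1)) / (8 * N) ≤
        l ^ 2 * ((m+1) * r) / (8 * N) := by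
      have e1 : l ^ 2 / 8 + μ ^ 2 * (m * ((N : ℝ) - m + 1)) / (8 * N)
          = l ^ 2 * ((N:ℝ) * r^2 + m * (r-1)^2 * (r+1)) / (8 * N * r^2) := by
        simp only [hμdef]
        have : (N:ℝ) - m + 1 = r + 1 := by simp only [hrdef]
        rw [this]
        field_simp
      have e2 : l ^ 2 * ((m+1) * r) / (8 * N)
          = l ^ 2 * ((m+1) * r^3) / (8 * N * r^2) := by
        field_simp
      rw [e1, e2]
      gcongr
    have hmean : l * k / r + μ * m * k / N = l * ((m:ℝ)+1) * k / N := by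
      simp only [hμdef]
      rw [hNrm]
      have : r + (m:ℝ) ≠ 0 := by positivity
      field_simp
      ring
    -- assemble
    have hexp_le : Real.exp (l ^ 2 / 8 + l * k / r) *
          Real.exp (μ * m * k / N + μ ^ 2 * (m * ((N : ℝ) - m + 1)) / (8 * N))
        ≤ Real.exp (l * ((m:ℝ)+1) * k / N + l ^ 2 * (((m:ℝ)+1) * ((N:ℝ) - (m+1) + 1)) / (8 * N)) := by
      rw [← Real.exp_add]
      apply Real.exp_le_exp.mpr
      have : (N:ℝ) - ((m:ℕ)+1) + 1 = r := by simp only [hrdef]; push_cast; ring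
      rw [this]
      calc l ^ 2 / 8 + l * k / r + (μ * m * k / N + μ ^ 2 * (m * ((N : ℝ) - m + 1)) / (8 * N))
          = (l * k / r + μ * m * k / N) + (l ^ 2 / 8 + μ ^ 2 * (m * ((N : ℝ) - m + 1)) / (8 * N)) := by ring
        _ ≤ l * ((m:ℝ)+1) * k / N + l ^ 2 * ((m+1) * r) / (8 * N) := by
            rw [hmean]; gcongr
        _ = l * ((m:ℝ)+1) * k / N + l ^ 2 * (((m:ℝ)+1) * r) / (8 * N) := by push_cast; ring
    have final : ((m:ℝ)+1) *
        ∑ t ∈ powersetCard (m+1) (univ : Finset (Fin N)), Real.exp (l * ((t ∩ S).card : ℝ))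
        ≤ ((m:ℝ)+1) * ((N.choose (m+1) : ℝ) *
          Real.exp (l * ((m:ℝ)+1) * k / N + l ^ 2 * (((m:ℝ)+1) * ((N:ℝ) - ((m:ℕ)+1) + 1)) / (8 * N))) := by
      apply le_trans hchain
      rw [show ((m:ℝ)+1) * ((N.choose (m+1) : ℝ) * Real.exp _) = ((m:ℝ)+1) * (N.choose (m+1) : ℝ) * Real.exp _ by ring, hchoose]
      rw [show (N.choose m : ℝ) * r * Real.exp _ = r * ((N.choose m : ℝ) * Real.exp _) by ring]
      rw [show r * Real.exp (l ^ 2 / 8 + l * k / r) * ((N.choose m : ℝ) * Real.exp (μ * m * k / N + μ ^ 2 * (m * ((N : ℝ) - m + 1)) / (8 * N))) = r * ((N.choose m : ℝ) * (Real.exp (l ^ 2 / 8 + l * k / r) * Real.exp (μ * m * k / N + μ ^ 2 * (m * ((N : ℝ) - m + 1)) / (8 * N)))) by ring]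
      apply mul_le_mul_of_nonneg_left _ (le_of_lt hrpos)
      apply mul_le_mul_of_nonneg_left _ (Nat.cast_nonneg _)
      exact hexp_le
    have hm1pos : (0:ℝ) < (m:ℝ) + 1 := by positivity
    have := (mul_le_mul_iff_right₀ hm1pos).mp final
    convert this using 2
    · rfl
    · norm_num

lemma chernoff_count {N m : ℕ} (S : Finset (Fin N)) (hm : 1 ≤ m) (hmN : m ≤ N)
    (τ : ℝ) (hτ : 0 < τ) :
    ((((powersetCard m (univ : Finset (Fin N))).filter
        (fun t => (m : ℝ) * S.card / N + τ ≤ ((t ∩ S).card : ℝ))).card : ℝ))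
      ≤ (N.choose m : ℝ) * Real.exp (- τ ^ 2 / (4 * ((m : ℝ) * ((N:ℝ) - m + 1) / (8 * N)))) := by
  have hN1 : (1:ℝ) ≤ N := by exact_mod_cast le_trans hm hmN
  have hNpos : (0:ℝ) < N := by linarith
  have hm1 : (1:ℝ) ≤ m := by exact_mod_cast hm
  have hr1 : (1:ℝ) ≤ (N:ℝ) - m + 1 := by
    have : (m:ℝ) ≤ N := by exact_mod_cast hmN
    linarith
  set A : ℝ := (m : ℝ) * ((N:ℝ) - m + 1) / (8 * N) with hA
  have hApos : 0 < A := by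
    apply div_pos (mul_pos (by linarith) (by linarith)) (by linarith)
  set l : ℝ := τ / (2 * A) with hl
  have hlpos : 0 < l := div_pos hτ (by linarith)
  set θ : ℝ := (m : ℝ) * S.card / N + τ with hθ
  have step1 : ((((powersetCard m (univ : Finset (Fin N))).filter
        (fun t => θ ≤ ((t ∩ S).card : ℝ))).card : ℝ)) * Real.exp (l * θ)
      ≤ ∑ t ∈ powersetCard m (univ : Finset (Fin N)), Real.exp (l * ((t ∩ S).card : ℝ)) := by
    calc ((((powersetCard m (univ : Finset (Fin N))).filter
          (fun t => θ ≤ ((t ∩ S).card : ℝ))).card : ℝ)) * Real.exp (l * θ)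
        = ∑ _t ∈ (powersetCard m (univ : Finset (Fin N))).filter
            (fun t => θ ≤ ((t ∩ S).card : ℝ)), Real.exp (l * θ) := by
          rw [Finset.sum_const, nsmul_eq_mul]
      _ ≤ ∑ t ∈ (powersetCard m (univ : Finset (Fin N))).filter
            (fun t => θ ≤ ((t ∩ S).card : ℝ)), Real.exp (l * ((t ∩ S).card : ℝ)) := by
          apply Finset.sum_le_sum
          intro t ht
          have := (Finset.mem_filter.mp ht).2
          exact Real.exp_le_exp.mpr (mul_le_mul_of_nonneg_left this (le_of_lt hlpos))
      _ ≤ ∑ t ∈ powersetCard m (univ : Finset (Fin N)), Real.exp (l * ((t ∩ S).card : ℝ)) := by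
          apply Finset.sum_le_sum_of_subset_of_nonneg (Finset.filter_subset _ _)
          intro t _ _
          exact (Real.exp_pos _).le
  have step2 := mgf_bound S m hmN l (le_of_lt hlpos)
  have hmgf_exp : l * m * S.card / N + l ^ 2 * (m * ((N : ℝ) - m + 1)) / (8 * N)
      = l * m * S.card / N + l ^ 2 * A := by rw [hA]; ring
  have step3 : ((((powersetCard m (univ : Finset (Fin N))).filter
        (fun t => θ ≤ ((t ∩ S).card : ℝ))).card : ℝ))
      ≤ (N.choose m : ℝ) * Real.exp (l * m * S.card / N + l ^ 2 * A) / Real.exp (l * θ) := by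
    rw [le_div_iff₀ (Real.exp_pos _)]
    calc _ ≤ ∑ t ∈ powersetCard m (univ : Finset (Fin N)),
            Real.exp (l * ((t ∩ S).card : ℝ)) := step1
      _ ≤ (N.choose m : ℝ) * Real.exp (l * m * S.card / N + l ^ 2 * A) := by
          rw [← hmgf_exp]; exact step2
  apply le_trans step3
  rw [mul_div_assoc, ← Real.exp_sub]
  apply mul_le_mul_of_nonneg_left _ (Nat.cast_nonneg _)
  apply Real.exp_le_exp.mpr
  apply le_of_eq
  have : l * θ = l * ((m : ℝ) * S.card / N) + l * τ := by rw [hθ]; ring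
  rw [this]
  have h4A : - τ ^ 2 / (4 * A) = l ^ 2 * A - l * τ := by
    rw [hl]
    field_simp
    ring
  rw [hA] at h4A ⊢
  rw [h4A]
  ring

lemma blockSum_restrict {d p N : ℕ} (q : Fin (p + 1) → Fin N → ZMod d) (t : Finset (Fin N)) :
    (blockSum fun j => restrictTo t (q j)) = restrictTo t (blockSum q) := rfl

lemma relWeight_restrict {d N : ℕ} (s : Fin N → ZMod d) (t : Finset (Fin N)) :
    relWeight (restrictTo t s)
      = ((t ∩ (Finset.univ.filter fun i => s i ≠ 0)).card : ℝ) / t.card := by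
  unfold relWeight restrictTo
  congr 1
  · norm_cast
    apply Finset.card_bij (fun i _ => i.1)
    · intro i hi
      simp only [Finset.mem_filter] at hi
      simp [Finset.mem_inter, i.2, hi.2]
    · intro i _ j _ h
      exact Subtype.ext h
    · intro i hi
      simp only [Finset.mem_inter, Finset.mem_filter] at hi
      exact ⟨⟨i, hi.1⟩, by simp [hi.2.2], rfl⟩
  · norm_cast
    exact Fintype.card_coe t


lemma compl_inter_card {N : ℕ} (t S : Finset (Fin N)) :
    ((tᶜ ∩ S).card : ℝ) = (S.card : ℝ) - ((t ∩ S).card : ℝ) := by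
  have hints : tᶜ ∩ S = S \ t := by
    ext i; simp [Finset.mem_sdiff, Finset.mem_compl]; tauto
  have h := Finset.card_sdiff_add_card_inter S t
  rw [Finset.inter_comm S t] at h
  rw [hints]
  have := congrArg (fun n : ℕ => (n : ℝ)) h
  push_cast at this
  linarith


set_option maxHeartbeats 1000000 in
/-- **Classical sampling bound for the multiparty strategy.**
Let `d ≥ 2`, `p ≥ 1`, `N ≥ 2`, `δ > 0`, `1 ≤ m ≤ N/2`.  If a subset `t ⊆ {1,…,N}` of
size `m` is chosen uniformly at random, then for every tuple `q = (q⁰,…,q^p)` of `p+1`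
strings in `𝒜_d^N`, the probability that `|w(s(q_t)) - w(s(q_{-t}))| > δ` is at most
`2·exp(-δ²·m·N/(N+2))`; since this holds for every `q`, the error probability
`ε^cl = max_q Pr_t(⋯)` of the strategy obeys the same bound. -/
theorem sampling_bound_multiparty (d p N m : ℕ) (hd : 2 ≤ d) (hp : 1 ≤ p) (hN : 2 ≤ N)
    (hm : 1 ≤ m) (hm2 : 2 * m ≤ N) (δ : ℝ) (hδ : 0 < δ) :
    ∀ q : Fin (p + 1) → Fin N → ZMod d,
      (Nat.card {t : Finset (Fin N) //
          t.card = m ∧ δ < |relWeight (blockSum fun j => restrictTo t (q j))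
                            - relWeight (blockSum fun j => restrictTo tᶜ (q j))|} : ℝ)
        / (N.choose m : ℝ)
        ≤ 2 * Real.exp (-(δ ^ 2) * m * N / (N + 2)) := by
  intro q
  classical
  set s : Fin N → ZMod d := blockSum q with hs
  set S : Finset (Fin N) := Finset.univ.filter (fun i => s i ≠ 0) with hS
  have hmltN : m < N := by omega
  have hmN : m ≤ N := le_of_lt hmltN
  have hNR : (2:ℝ) ≤ N := by exact_mod_cast hN
  have hNpos : (0:ℝ) < N := by linarith
  have hmR : (1:ℝ) ≤ m := by exact_mod_cast hm
  have hmpos : (0:ℝ) < m := by linarith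
  have hm2R : 2 * (m:ℝ) ≤ N := by exact_mod_cast hm2
  set nr : ℝ := (N:ℝ) - m with hnr
  have hnrpos : (0:ℝ) < nr := by
    have : (m:ℝ) < N := by exact_mod_cast hmltN
    simp only [hnr]; linarith
  set τ : ℝ := δ * m * nr / N with hτdef
  have hτpos : 0 < τ := by
    apply div_pos (mul_pos (mul_pos hδ hmpos) hnrpos) hNpos
  -- the bad predicate
  set P : Finset (Fin N) → Prop := fun t =>
    δ < |relWeight (blockSum fun j => restrictTo t (q j))
          - relWeight (blockSum fun j => restrictTo tᶜ (q j))| with hP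
  -- convert Nat.card to Finset.card
  have hcard : (Nat.card {t : Finset (Fin N) // t.card = m ∧ P t} : ℝ)
      = (((univ : Finset (Finset (Fin N))).filter (fun t => t.card = m ∧ P t)).card : ℝ) := by
    rw [Nat.card_eq_fintype_card, Fintype.card_subtype]
  -- inclusion into the two one-sided events
  set f1 : Finset (Finset (Fin N)) := (powersetCard m (univ : Finset (Fin N))).filter
      (fun t => (m : ℝ) * S.card / N + τ ≤ ((t ∩ S).card : ℝ)) with hf1
  set f2 : Finset (Finset (Fin N)) := (powersetCard m (univ : Finset (Fin N))).filter
      (fun t => (m : ℝ) * Sᶜ.card / N + τ ≤ ((t ∩ Sᶜ).card : ℝ)) with hf2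
  have hsub : (univ : Finset (Finset (Fin N))).filter (fun t => t.card = m ∧ P t) ⊆ f1 ∪ f2 := by
    intro t ht
    rw [Finset.mem_filter] at ht
    obtain ⟨-, htm, htP⟩ := ht
    have htmem : t ∈ powersetCard m (univ : Finset (Fin N)) :=
      Finset.mem_powersetCard_univ.mpr htm
    set X : ℝ := ((t ∩ S).card : ℝ) with hX
    set k : ℝ := (S.card : ℝ) with hk
    have hXm : X ≤ m := by
      have := Finset.card_le_card (Finset.inter_subset_left (s₁ := t) (s₂ := S))
      rw [htm] at this
      simp only [hX]
      exact_mod_cast this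
    have hX0 : 0 ≤ X := Nat.cast_nonneg _
    have hcompl_card : ((tᶜ.card : ℕ) : ℝ) = nr := by
      rw [Finset.card_compl, htm, Fintype.card_fin, Nat.cast_sub hmN]
    -- weights
    have hW1 : relWeight (blockSum fun j => restrictTo t (q j)) = X / m := by
      rw [blockSum_restrict, relWeight_restrict, ← hs, ← hS, htm]
    have hW2 : relWeight (blockSum fun j => restrictTo tᶜ (q j)) = (k - X) / nr := by
      rw [blockSum_restrict, relWeight_restrict, ← hs, ← hS, compl_inter_card, hcompl_card]
    rw [hP] at htP
    simp only [hW1, hW2] at htP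
    -- the common algebraic identity
    have hNmr : (N:ℝ) = m + nr := by simp only [hnr]; ring
    have hdiff : X / m - (k - X) / nr = (X * (N:ℝ) - m * k) / (m * nr) := by
      rw [hNmr]
      field_simp
      ring
    rw [Finset.mem_union]
    rcases lt_abs.mp htP with hcase | hcase
    · -- upper tail for S
      left
      rw [hf1, Finset.mem_filter]
      refine ⟨htmem, ?_⟩
      rw [hdiff, lt_div_iff₀ (mul_pos hmpos hnrpos)] at hcase
      have heq : (m:ℝ) * S.card / N + τ = ((m:ℝ) * k + δ * (m * nr)) / N := by
        rw [hτdef, ← hk]; ring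
      rw [heq, div_le_iff₀ hNpos, ← hX]
      linarith [hcase]
    · -- upper tail for Sᶜ
      right
      rw [hf2, Finset.mem_filter]
      refine ⟨htmem, ?_⟩
      have habs : δ < (k - X) / nr - X / m := by linarith
      have hX' : ((t ∩ Sᶜ).card : ℝ) = (m:ℝ) - X := by
        have hints : t ∩ Sᶜ = t \ S := by
          ext i; simp [Finset.mem_sdiff, Finset.mem_compl]
        have h := Finset.card_sdiff_add_card_inter t S
        rw [hints]
        have := congrArg (fun n : ℕ => (n : ℝ)) h
        push_cast at this
        rw [← hX] at this
        rw [htm] at this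
        push_cast at this
        linarith
      have hk' : ((Sᶜ.card : ℕ) : ℝ) = (N:ℝ) - k := by
        rw [Finset.card_compl, Nat.cast_sub (Finset.card_le_univ S), Fintype.card_fin, hk]
      have hdiff' : (k - X) / nr - X / m
          = (((m:ℝ) - X) * (N:ℝ) - m * ((N:ℝ) - k)) / (m * nr) := by
        rw [hNmr]
        field_simp
        ring
      rw [hdiff', lt_div_iff₀ (mul_pos hmpos hnrpos)] at habs
      have heq : (m:ℝ) * Sᶜ.card / N + τ = ((m:ℝ) * ((N:ℝ) - k) + δ * (m * nr)) / N := by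
        rw [hτdef, hk']; ring
      rw [heq, div_le_iff₀ hNpos, hX']
      linarith [habs]
  -- assemble
  rw [hcard]
  have hC : (0:ℝ) < (N.choose m : ℝ) := by exact_mod_cast Nat.choose_pos hmN
  rw [div_le_iff₀ hC]
  have h1 := chernoff_count S hm hmN τ hτpos
  have h2 := chernoff_count Sᶜ hm hmN τ hτpos
  rw [← hf1] at h1
  rw [← hf2] at h2
  have hcount : ((((univ : Finset (Finset (Fin N))).filter
        (fun t => t.card = m ∧ P t)).card : ℝ)) ≤ (f1.card : ℝ) + (f2.card : ℝ) := by
    have ha := Finset.card_le_card hsub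
    have hb := le_trans ha (Finset.card_union_le f1 f2)
    exact_mod_cast hb
  have hr1 : (1:ℝ) ≤ nr := by simp only [hnr]; linarith
  have hApos : (0:ℝ) < (m : ℝ) * ((N:ℝ) - m + 1) / (8 * N) := by
    apply div_pos (mul_pos hmpos (by linarith)) (by linarith)
  have hexp : Real.exp (- τ ^ 2 / (4 * ((m : ℝ) * ((N:ℝ) - m + 1) / (8 * N))))
      ≤ Real.exp (-(δ ^ 2) * m * N / (N + 2)) := by
    apply Real.exp_le_exp.mpr
    have et : - τ ^ 2 / (4 * ((m : ℝ) * ((N:ℝ) - m + 1) / (8 * N)))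
        = -(2 * δ ^ 2 * m * nr ^ 2 / (N * (nr + 1))) := by
      rw [hτdef]
      have hNm1 : (N:ℝ) - m + 1 = nr + 1 := by simp only [hnr]
      rw [hNm1]
      field_simp
      ring
    have etr : -(δ ^ 2) * (m:ℝ) * N / (N + 2) = -((δ ^ 2) * m * N / (N + 2)) := by ring
    rw [et, etr, neg_le_neg_iff]
    have h2nr : (0:ℝ) ≤ 2 * nr - N := by simp only [hnr]; linarith
    have hpoly2 : (N:ℝ)^2 * (nr + 1) ≤ 2 * nr^2 * (N + 2) := by
      nlinarith [mul_nonneg (mul_nonneg hnrpos.le (by linarith : (0:ℝ) ≤ (N:ℝ) + 2)) h2nr,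
        mul_nonneg hNpos.le h2nr]
    rw [div_le_div_iff₀ (by linarith) (mul_pos hNpos (by linarith))]
    nlinarith [mul_le_mul_of_nonneg_left hpoly2 (show (0:ℝ) ≤ δ^2 * m by positivity)]
  have hfin1 : (f1.card : ℝ) ≤ (N.choose m : ℝ) * Real.exp (-(δ ^ 2) * m * N / (N + 2)) :=
    le_trans h1 (mul_le_mul_of_nonneg_left hexp hC.le)
  have hfin2 : (f2.card : ℝ) ≤ (N.choose m : ℝ) * Real.exp (-(δ ^ 2) * m * N / (N + 2)) :=
    le_trans h2 (mul_le_mul_of_nonneg_left hexp hC.le)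
  calc ((((univ : Finset (Finset (Fin N))).filter (fun t => t.card = m ∧ P t)).card : ℝ))
      ≤ (f1.card : ℝ) + (f2.card : ℝ) := hcount
    _ ≤ 2 * ((N.choose m : ℝ) * Real.exp (-(δ ^ 2) * m * N / (N + 2))) := by linarith
    _ = 2 * Real.exp (-(δ ^ 2) * m * N / (N + 2)) * (N.choose m : ℝ) := by ring
end

section
/- Let d ≥ 2, p ≥ 1, n ≥ 1, δ > 0, and fix ω ∈ [0,1] with ω + δ ≤ 1 − 1/d. Fix a tuple x = (x¹,…,x^p) of p strings in 𝒜_d^n and define J(ω : x) = { y ∈ 𝒜_d^n : |w(s(y,x¹,…,x^p)) − ω| ≤ δ }. Then |J(ω : x)| ≤ d^{n·H_d(ω + δ)}. -/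
/-- The sum string `s(y, x¹,…,x^p)_i = y_i + x¹_i + ⋯ + x^p_i` in `ZMod d`. -/
def sumWith {d p n : ℕ} (x : Fin p → Fin n → ZMod d) (y : Fin n → ZMod d) :
    Fin n → ZMod d := fun i => y i + ∑ j, x j i

/-- The `d`-ary entropy function
`H_d(x) = x·log_d(d−1) − x·log_d x − (1−x)·log_d(1−x)` (with the junk-value
convention `log 0 = 0`, this agrees with `H_d(0) = 0` and `H_d(1) = log_d(d−1)`). -/
noncomputable def Hd (d : ℕ) (x : ℝ) : ℝ :=
  x * Real.logb d (d - 1) - x * Real.logb d x - (1 - x) * Real.logb d (1 - x)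

open Finset

theorem rpow_neg_mul_Hd {d : ℕ} (hd : 1 < d) {r : ℝ} (hr0 : 0 < r) (hr1 : r < 1) (m : ℝ) :
    (d : ℝ) ^ (-(m * Hd d r)) = (1 - r) ^ m * (r / ((d - 1) * (1 - r))) ^ (r * m) := by
  have hd0 : (0 : ℝ) < d := by positivity
  have hd1 : (1 : ℝ) < d := by exact_mod_cast hd
  have hdm1 : (0 : ℝ) < d - 1 := by linarith
  have h1r : 0 < 1 - r := by linarith
  have hρ : Real.logb d (r / ((d - 1) * (1 - r)))
      = Real.logb d r - Real.logb d (d - 1) - Real.logb d (1 - r) := by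
    rw [Real.logb_div hr0.ne' (by positivity), Real.logb_mul hdm1.ne' h1r.ne']
    ring
  have hexp : -(m * Hd d r) = Real.logb d (1 - r) * m
      + Real.logb d (r / ((d - 1) * (1 - r))) * (r * m) := by
    rw [hρ, Hd]; ring
  rw [hexp, Real.rpow_add hd0, Real.rpow_mul hd0.le, Real.rpow_mul hd0.le,
    Real.rpow_logb hd0 hd1.ne' h1r, Real.rpow_logb hd0 hd1.ne' (by positivity)]

section HammingBall

variable {ι α : Type*} [Fintype ι] [Fintype α] [DecidableEq α] [Zero α]

variable (α) in
noncomputable def qaryWeight (r : ℝ) (t : α) : ℝ :=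
  if t = 0 then 1 - r else r / (Fintype.card α - 1)

theorem qaryWeight_nonneg (hα : 1 < Fintype.card α) {r : ℝ} (hr0 : 0 ≤ r) (hr1 : r ≤ 1)
    (t : α) : 0 ≤ qaryWeight α r t := by
  have : (1 : ℝ) < Fintype.card α := by exact_mod_cast hα
  unfold qaryWeight
  split_ifs <;> first | linarith | exact div_nonneg hr0 (by linarith)

theorem sum_qaryWeight (hα : 1 < Fintype.card α) (r : ℝ) : ∑ t, qaryWeight α r t = 1 := by
  have hcard : #{t : α | t ≠ 0} = Fintype.card α - 1 := by
    rw [filter_ne', card_erase_of_mem (mem_univ _), card_univ]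
  have hα' : (Fintype.card α : ℝ) - 1 ≠ 0 := by
    have : (1 : ℝ) < Fintype.card α := by exact_mod_cast hα
    linarith
  simp only [qaryWeight, sum_ite, sum_const, filter_eq', mem_univ, if_true, card_singleton,
    hcard, nsmul_eq_mul]
  rw [Nat.cast_sub hα.le]
  field_simp
  ring

theorem prod_qaryWeight {r : ℝ} (hr1 : r < 1) (z : ι → α) :
    ∏ i, qaryWeight α r (z i)
      = (1 - r) ^ Fintype.card ι * (r / ((Fintype.card α - 1) * (1 - r))) ^ hammingNorm z := by
  have hfactor : ∀ t : α, qaryWeight α r t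
      = (1 - r) * if t ≠ 0 then r / ((Fintype.card α - 1) * (1 - r)) else 1 := by
    intro t
    unfold qaryWeight
    split_ifs <;> first | simp_all | field_simp [show 1 - r ≠ 0 by linarith]
  simp only [hfactor, prod_mul_distrib, prod_const, card_univ, prod_ite, one_pow, mul_one]
  rfl

theorem card_hammingBall_le [DecidableEq ι] (hα : 1 < Fintype.card α) {r : ℝ} (hr0 : 0 < r)
    (hr : r ≤ 1 - 1 / Fintype.card α) :
    (#{z : ι → α | (hammingNorm z : ℝ) ≤ r * Fintype.card ι} : ℝ)
      ≤ (Fintype.card α : ℝ) ^ (Fintype.card ι * Hd (Fintype.card α) r) := by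
  set ball : Finset (ι → α) := {z | (hammingNorm z : ℝ) ≤ r * Fintype.card ι}
  set ρ := r / ((Fintype.card α - 1) * (1 - r))
  have hq : (1 : ℝ) < Fintype.card α := by exact_mod_cast hα
  have hr1 : r < 1 := by linarith [one_div_pos.2 (zero_lt_one.trans hq)]
  have hρ0 : 0 < ρ := div_pos hr0 (mul_pos (by linarith) (by linarith))
  have hρ1 : ρ ≤ 1 := by
    rw [div_le_one (mul_pos (by linarith) (by linarith))]
    rw [le_sub_iff_add_le, ← le_sub_iff_add_le', div_le_iff₀ (by linarith)] at hr
    nlinarith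
  set minMass : ℝ := (Fintype.card α : ℝ) ^ (-(Fintype.card ι * Hd (Fintype.card α) r))
    with hminMass
  have hlower : ∀ z ∈ ball, minMass ≤ ∏ i, qaryWeight α r (z i) := by
    intro z hz
    rw [hminMass, rpow_neg_mul_Hd hα hr0 hr1, Real.rpow_natCast, prod_qaryWeight hr1,
      ← Real.rpow_natCast ρ]
    refine mul_le_mul_of_nonneg_left (Real.rpow_le_rpow_of_exponent_ge hρ0 hρ1 ?_) (by bound)
    exact (mem_filter.1 hz).2
  have hmass : #ball * minMass ≤ 1 :=
    calc #ball * minMass = ∑ _z ∈ ball, minMass := by rw [sum_const, nsmul_eq_mul]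
      _ ≤ ∑ z ∈ ball, ∏ i, qaryWeight α r (z i) := sum_le_sum hlower
      _ ≤ ∑ z : ι → α, ∏ i, qaryWeight α r (z i) :=
          sum_le_sum_of_subset_of_nonneg (subset_univ _) fun z _ _ =>
            prod_nonneg fun i _ => qaryWeight_nonneg hα hr0.le hr1.le (z i)
      _ = 1 := by rw [← Fintype.prod_sum, sum_qaryWeight hα, prod_const_one]
  rwa [hminMass, Real.rpow_neg (by positivity), ← div_eq_mul_inv,
    div_le_one (by positivity)] at hmass

end HammingBall

theorem relWeight_eq_hammingNorm_div {d : ℕ} {ι : Type*} [Fintype ι] (x : ι → ZMod d) :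
    relWeight x = hammingNorm x / Fintype.card ι :=
  rfl

theorem hammingNorm_le_of_relWeight_le {d : ℕ} {ι : Type*} [Fintype ι] {x : ι → ZMod d}
    {r : ℝ} (h : relWeight x ≤ r) : (hammingNorm x : ℝ) ≤ r * Fintype.card ι := by
  rcases (Fintype.card ι).eq_zero_or_pos with hι | hι
  · have : IsEmpty ι := Fintype.card_eq_zero_iff.1 hι
    simp [hammingNorm]
  · rwa [relWeight_eq_hammingNorm_div, div_le_iff₀ (by exact_mod_cast hι)] at h

theorem sumWith_eq_add {d p n : ℕ} (x : Fin p → Fin n → ZMod d) (y : Fin n → ZMod d) :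
    sumWith x y = y + ∑ j, x j := by
  ext i
  simp [sumWith]

theorem J_card_entropy_bound_general (d p n : ℕ) (hd : 2 ≤ d)
    (δ : ℝ) (hδ : 0 < δ) (ω : ℝ) (hω : ω ∈ Set.Icc (0 : ℝ) 1)
    (hωδ : ω + δ ≤ 1 - 1 / d) (x : Fin p → Fin n → ZMod d) :
    (Nat.card {y : Fin n → ZMod d | |relWeight (sumWith x y) - ω| ≤ δ} : ℝ)
      ≤ (d : ℝ) ^ ((n : ℝ) * Hd d (ω + δ)) := by
  have : NeZero d := ⟨by omega⟩
  have hr0 : 0 < ω + δ := by linarith [hω.1]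
  have hball := card_hammingBall_le (ι := Fin n) (α := ZMod d) (by rw [ZMod.card]; omega) hr0
    (by rwa [ZMod.card])
  rw [ZMod.card, Fintype.card_fin] at hball
  have htranslate : Nat.card {y : Fin n → ZMod d | |relWeight (sumWith x y) - ω| ≤ δ}
      = Nat.card {z : Fin n → ZMod d | |relWeight z - ω| ≤ δ} :=
    Nat.card_congr <| Equiv.subtypeEquiv (Equiv.addRight (∑ j, x j)) fun y => by
      simp [sumWith_eq_add]
  have hsubset : Nat.card {z : Fin n → ZMod d | |relWeight z - ω| ≤ δ}
      ≤ #{z : Fin n → ZMod d | (hammingNorm z : ℝ) ≤ (ω + δ) * n} := by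
    rw [Set.coe_ofPred, Nat.card_eq_fintype_card, Fintype.card_subtype]
    refine card_le_card fun z hz => ?_
    simp only [mem_filter, mem_univ, true_and] at hz ⊢
    simpa using hammingNorm_le_of_relWeight_le (x := z) (by linarith [(abs_le.1 hz).2])
  calc _ ≤ (#{z : Fin n → ZMod d | (hammingNorm z : ℝ) ≤ (ω + δ) * n} : ℝ) := by
        exact_mod_cast htranslate ▸ hsubset
    _ ≤ _ := hball

/-- **Entropy bound on `|J(ω : x)|`.**
For `d ≥ 2`, `p ≥ 1`, `n ≥ 1`, `δ > 0`, and `ω ∈ [0,1]` with `ω + δ ≤ 1 − 1/d`,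
and any fixed tuple `x = (x¹,…,x^p)` of strings in `𝒜_d^n`, the set
`J(ω : x) = { y ∈ 𝒜_d^n : |w(s(y,x¹,…,x^p)) − ω| ≤ δ }` satisfies
`|J(ω : x)| ≤ d^{n·H_d(ω+δ)}`. -/
theorem J_card_entropy_bound (d p n : ℕ) (hd : 2 ≤ d) (hp : 1 ≤ p) (hn : 1 ≤ n)
    (δ : ℝ) (hδ : 0 < δ) (ω : ℝ) (hω : ω ∈ Set.Icc (0 : ℝ) 1)
    (hωδ : ω + δ ≤ 1 - 1 / d) (x : Fin p → Fin n → ZMod d) :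
    (Nat.card {y : Fin n → ZMod d | |relWeight (sumWith x y) - ω| ≤ δ} : ℝ)
      ≤ (d : ℝ) ^ ((n : ℝ) * Hd d (ω + δ)) :=
  J_card_entropy_bound_general d p n hd δ hδ ω hω hωδ x
end
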